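/- arXiv:2004.13315 — 3 statements merged into one kernel-verified Lean document; each statement's English description precedes it below -/
import Mathlib

section
/- Under the hypotheses of the H-circle separation setup, if an H-circle β separates two points of an H-circle α, then β intersects both connected components of Ξ − α. -/
/-!
If `β` missed a component `C` of `Ξ − α`, the connected set `C` would lie in a single component
of `Ξ − β`. Since the frontier of `C` is all of `α`, every point of `α \ β` is in the closure of
`C`, hence in that same component of `Ξ − β`; so `β` could not separate two points of `α`.
-/

open Set Topology

abbrev StdCircle : Type := Metric.sphere (0 : EuclideanSpace ℝ (Fin 2)) 1

def IsEmbCircle {Ξ : Type*} [TopologicalSpace Ξ] (α : Set Ξ) : Prop :=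
  ∃ f : StdCircle → Ξ, IsEmbedding f ∧ Set.range f = α

theorem connectedComponentIn_eq_of_mem_closure {X : Type*} [TopologicalSpace X]
    {S C : Set X} (hC : IsPreconnected C) (hCS : C ⊆ S) {b c : X} (hbS : b ∈ S)
    (hbC : b ∈ closure C) (hc : c ∈ C) :
    connectedComponentIn S b = connectedComponentIn S c := by
  have hinsert : IsPreconnected (insert b C) :=
    hC.subset_closure (subset_insert b C) (insert_subset hbC subset_closure)
  have hsub : insert b C ⊆ connectedComponentIn S b :=
    hinsert.subset_connectedComponentIn (mem_insert b C) (insert_subset hbS hCS)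
  exact connectedComponentIn_eq (hsub (mem_insert_of_mem b hc))

theorem separating_hcircle_meets_both_components_general {Ξ : Type*} [TopologicalSpace Ξ]
    (𝓒 : Set (Set Ξ))
    (htwo : ∀ α ∈ 𝓒, ∃ A B : Set Ξ, A ≠ B ∧
      {C : Set Ξ | ∃ x ∈ αᶜ, C = connectedComponentIn αᶜ x} = {A, B} ∧
      frontier A = α ∧ frontier B = α)
    (α β : Set Ξ) (hα : α ∈ 𝓒)
    (a a' : Ξ) (ha : a ∈ α \ β) (ha' : a' ∈ α \ β)
    (hsepβ : connectedComponentIn βᶜ a ≠ connectedComponentIn βᶜ a') :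
    ∀ C : Set Ξ, (∃ x ∈ αᶜ, C = connectedComponentIn αᶜ x) → (β ∩ C).Nonempty := by
  intro C hC
  obtain ⟨A, B, -, hcomponents, hfA, hfB⟩ := htwo α hα
  have hαC : α ⊆ closure C := by
    rcases (hcomponents ▸ hC : C ∈ ({A, B} : Set (Set Ξ))) with rfl | rfl
    · exact hfA ▸ frontier_subset_closure
    · exact hfB ▸ frontier_subset_closure
  obtain ⟨x, hx, rfl⟩ := hC
  by_contra hdisj
  have hCβ : connectedComponentIn αᶜ x ⊆ βᶜ := fun y hy hyβ => hdisj ⟨y, hyβ, hy⟩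
  have hsame : ∀ b ∈ α \ β, connectedComponentIn βᶜ b = connectedComponentIn βᶜ x :=
    fun b hb => connectedComponentIn_eq_of_mem_closure isPreconnected_connectedComponentIn hCβ
      hb.2 (hαC hb.1) (mem_connectedComponentIn hx)
  exact hsepβ ((hsame a ha).trans (hsame a' ha').symm)

/-- In the H-circle setup (with the knowledge that complements of H-circles have exactly two
components whose frontier is the full circle), if an H-circle `β` separates two points of an
H-circle `α`, then `β` intersects both connected components of `Ξ − α`. -/
theorem separating_hcircle_meets_both_components {Ξ : Type*} [TopologicalSpace Ξ]
    [CompactSpace Ξ] [ConnectedSpace Ξ] [LocallyConnectedSpace Ξ]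
    [TopologicalSpace.MetrizableSpace Ξ]
    (𝓒 : Set (Set Ξ))
    (hcirc : ∀ α ∈ 𝓒, IsEmbCircle α)
    (hnocut : ∀ x : Ξ, IsConnected ({x}ᶜ : Set Ξ))
    (hint : ∀ α ∈ 𝓒, ∀ β ∈ 𝓒, α ≠ β → (α ∩ β).Finite ∧ (α ∩ β).ncard ≤ 2)
    (hsep : ∀ x y : Ξ, x ≠ y → ∃ α ∈ 𝓒, x ∉ α ∧ y ∉ α ∧
      connectedComponentIn αᶜ x ≠ connectedComponentIn αᶜ y)
    (hbasis : TopologicalSpace.IsTopologicalBasis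
      {U : Set Ξ | ∃ α ∈ 𝓒, ∃ x ∉ α, U = connectedComponentIn αᶜ x})
    (htwo : ∀ α ∈ 𝓒, ∃ A B : Set Ξ, A ≠ B ∧
      {C : Set Ξ | ∃ x ∈ αᶜ, C = connectedComponentIn αᶜ x} = {A, B} ∧
      frontier A = α ∧ frontier B = α)
    (α β : Set Ξ) (hα : α ∈ 𝓒) (hβ : β ∈ 𝓒)
    (a a' : Ξ) (ha : a ∈ α \ β) (ha' : a' ∈ α \ β)
    (hsepβ : connectedComponentIn βᶜ a ≠ connectedComponentIn βᶜ a') :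
    ∀ C : Set Ξ, (∃ x ∈ αᶜ, C = connectedComponentIn αᶜ x) → (β ∩ C).Nonempty :=
  separating_hcircle_meets_both_components_general 𝓒 htwo α β hα a a' ha ha' hsepβ
end

section
/- Let α and β be two H-circles in Ξ intersecting in exactly two points c, c'. Then the two arcs of α − {c, c'} lie in the same connected component of Ξ − β if and only if the two arcs of β − {c, c'} lie in the same connected component of Ξ − α. -/
/-!
If every point of `τ` off `σ` lies in one complementary component of `σ`, then the other
component `V` of `σᶜ` misses `τ`, so the connected set `V` sits in a single component `W` of
`τᶜ`. Since `σ` is the frontier of `V`, every point of `σ` off `τ` is a limit of points of `V`;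
its component in the open set `τᶜ` is open (local connectedness), hence meets `V` and equals
`W`. The hypotheses are symmetric in `σ` and `τ`, which gives the equivalence.
-/

open Set Topology

section TwoSides

variable {X : Type*} [TopologicalSpace X]

def HasTwoSides (σ : Set X) : Prop :=
  ∃ A B : Set X, A ≠ B ∧
    {C : Set X | ∃ x ∈ σᶜ, C = connectedComponentIn σᶜ x} = {A, B} ∧
    frontier A = σ ∧ frontier B = σ

theorem HasTwoSides.isClosed {σ : Set X} (hσ : HasTwoSides σ) : IsClosed σ := by
  obtain ⟨A, -, -, -, hA, -⟩ := hσ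
  exact hA ▸ isClosed_frontier

theorem connectedComponentIn_eq_of_mem_closure_s4 [LocallyConnectedSpace X]
    {U V : Set X} (hU : IsOpen U) (hV : IsPreconnected V) (hVU : V ⊆ U) {z p : X}
    (hz : z ∈ V) (hp : p ∈ U) (hpV : p ∈ closure V) :
    connectedComponentIn U p = connectedComponentIn U z := by
  obtain ⟨w, hwp, hwV⟩ :=
    mem_closure_iff.mp hpV _ hU.connectedComponentIn (mem_connectedComponentIn hp)
  rw [connectedComponentIn_eq hwp,
    connectedComponentIn_eq (hV.subset_connectedComponentIn hz hVU hwV)]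

theorem HasTwoSides.exists_side_disjoint {σ τ : Set X} (hσ : HasTwoSides σ)
    (hτ : ∀ u ∈ τ \ σ, ∀ v ∈ τ \ σ, connectedComponentIn σᶜ u = connectedComponentIn σᶜ v) :
    ∃ z ∈ σᶜ, frontier (connectedComponentIn σᶜ z) = σ ∧
      Disjoint (connectedComponentIn σᶜ z) τ := by
  obtain ⟨A, B, hAB, hsides, hA, hB⟩ := hσ
  obtain ⟨a, ha, rfl⟩ : A ∈ {C : Set X | ∃ x ∈ σᶜ, C = connectedComponentIn σᶜ x} :=
    hsides ▸ mem_insert A {B}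
  obtain ⟨b, hb, rfl⟩ : B ∈ {C : Set X | ∃ x ∈ σᶜ, C = connectedComponentIn σᶜ x} :=
    hsides ▸ mem_insert_of_mem _ rfl
  by_cases hAτ : Disjoint (connectedComponentIn σᶜ a) τ
  · exact ⟨a, ha, hA, hAτ⟩
  refine ⟨b, hb, hB, disjoint_left.mpr fun w hwB hwτ => hAB ?_⟩
  obtain ⟨u, huA, huτ⟩ := not_disjoint_iff.mp hAτ
  have huσ : u ∈ σᶜ := connectedComponentIn_subset _ _ huA
  have hwσ : w ∈ σᶜ := connectedComponentIn_subset _ _ hwB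
  rw [connectedComponentIn_eq huA, connectedComponentIn_eq hwB]
  exact hτ u ⟨huτ, huσ⟩ w ⟨hwτ, hwσ⟩

theorem HasTwoSides.connectedComponentIn_eq_of_connectedComponentIn_eq [LocallyConnectedSpace X]
    {σ τ : Set X} (hσ : HasTwoSides σ) (hτ : IsClosed τ)
    (h : ∀ u ∈ τ \ σ, ∀ v ∈ τ \ σ, connectedComponentIn σᶜ u = connectedComponentIn σᶜ v) :
    ∀ x ∈ σ \ τ, ∀ y ∈ σ \ τ, connectedComponentIn τᶜ x = connectedComponentIn τᶜ y := by
  obtain ⟨z, hzσ, hfrontier, hdisj⟩ := hσ.exists_side_disjoint h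
  have hVτ : connectedComponentIn σᶜ z ⊆ τᶜ := fun w hw hwτ => hdisj.notMem_of_mem_left hw hwτ
  have hside : ∀ p ∈ σ \ τ, connectedComponentIn τᶜ p = connectedComponentIn τᶜ z := fun p hp =>
    connectedComponentIn_eq_of_mem_closure_s4 hτ.isOpen_compl
      isPreconnected_connectedComponentIn hVτ (mem_connectedComponentIn hzσ) hp.2
      (hfrontier ▸ hp.1).1
  intro x hx y hy
  rw [hside x hx, hside y hy]

theorem HasTwoSides.connectedComponentIn_eq_iff [LocallyConnectedSpace X] {σ τ : Set X}
    (hσ : HasTwoSides σ) (hτ : HasTwoSides τ) :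
    (∀ x ∈ σ \ τ, ∀ y ∈ σ \ τ, connectedComponentIn τᶜ x = connectedComponentIn τᶜ y) ↔
      ∀ x ∈ τ \ σ, ∀ y ∈ τ \ σ, connectedComponentIn σᶜ x = connectedComponentIn σᶜ y :=
  ⟨hτ.connectedComponentIn_eq_of_connectedComponentIn_eq hσ.isClosed,
    hσ.connectedComponentIn_eq_of_connectedComponentIn_eq hτ.isClosed⟩

end TwoSides

theorem hcircle_two_state_general {Ξ : Type*} [TopologicalSpace Ξ]
    [LocallyConnectedSpace Ξ]
    (𝓒 : Set (Set Ξ))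
    (htwo : ∀ α ∈ 𝓒, ∃ A B : Set Ξ, A ≠ B ∧
      {C : Set Ξ | ∃ x ∈ αᶜ, C = connectedComponentIn αᶜ x} = {A, B} ∧
      frontier A = α ∧ frontier B = α)
    (α β : Set Ξ) (hα : α ∈ 𝓒) (hβ : β ∈ 𝓒)
    (c c' : Ξ) (hαβ : α ∩ β = {c, c'}) :
    (∀ x ∈ α \ {c, c'}, ∀ y ∈ α \ {c, c'},
        connectedComponentIn βᶜ x = connectedComponentIn βᶜ y) ↔
      (∀ x ∈ β \ {c, c'}, ∀ y ∈ β \ {c, c'},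
        connectedComponentIn αᶜ x = connectedComponentIn αᶜ y) := by
  rw [← hαβ, sdiff_self_inter, sdiff_inter_self_eq_sdiff]
  exact HasTwoSides.connectedComponentIn_eq_iff (htwo α hα) (htwo β hβ)

/-- Two-state lemma: if the H-circles `α, β` intersect in exactly the two points `c, c'`,
then the two arcs of `α − {c,c'}` lie in the same connected component of `Ξ − β` if and only
if the two arcs of `β − {c,c'}` lie in the same connected component of `Ξ − α`. -/
theorem hcircle_two_state {Ξ : Type*} [TopologicalSpace Ξ]
    [CompactSpace Ξ] [ConnectedSpace Ξ] [LocallyConnectedSpace Ξ]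
    [TopologicalSpace.MetrizableSpace Ξ]
    (𝓒 : Set (Set Ξ))
    (hcirc : ∀ α ∈ 𝓒, IsEmbCircle α)
    (hnocut : ∀ x : Ξ, IsConnected ({x}ᶜ : Set Ξ))
    (hint : ∀ α ∈ 𝓒, ∀ β ∈ 𝓒, α ≠ β → (α ∩ β).Finite ∧ (α ∩ β).ncard ≤ 2)
    (hsep : ∀ x y : Ξ, x ≠ y → ∃ α ∈ 𝓒, x ∉ α ∧ y ∉ α ∧
      connectedComponentIn αᶜ x ≠ connectedComponentIn αᶜ y)
    (hbasis : TopologicalSpace.IsTopologicalBasis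
      {U : Set Ξ | ∃ α ∈ 𝓒, ∃ x ∉ α, U = connectedComponentIn αᶜ x})
    (htwo : ∀ α ∈ 𝓒, ∃ A B : Set Ξ, A ≠ B ∧
      {C : Set Ξ | ∃ x ∈ αᶜ, C = connectedComponentIn αᶜ x} = {A, B} ∧
      frontier A = α ∧ frontier B = α)
    (α β : Set Ξ) (hα : α ∈ 𝓒) (hβ : β ∈ 𝓒)
    (c c' : Ξ) (hcc' : c ≠ c') (hαβ : α ∩ β = {c, c'}) :
    (∀ x ∈ α \ {c, c'}, ∀ y ∈ α \ {c, c'},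
        connectedComponentIn βᶜ x = connectedComponentIn βᶜ y) ↔
      (∀ x ∈ β \ {c, c'}, ∀ y ∈ β \ {c, c'},
        connectedComponentIn αᶜ x = connectedComponentIn αᶜ y) :=
  hcircle_two_state_general 𝓒 htwo α β hα hβ c c' hαβ
end

section
/- Let Y be a locally connected topological space and Z ⊆ Y a closed subset. Then every connected component C of Y − Z embeds topologically into the space of sides Y ⋌ Z (via y ↦ (y, germ of C)), and the connected components of Y ⋌ Z are exactly the closures-with-sides C̃ = { (y, side) : C_U ⊆ C for all neighborhoods U of y } of the connected components C of Y − Z; in particular components of Y ⋌ Z correspond bijectively to components of Y − Z. -/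
open Set Topology

variable (Y : Type*) [TopologicalSpace Y] (Z : Set Y)

/-- A sided point of the pair `Z ⊆ Y`: a point `y` together with a side of `y`, i.e. a
compatible choice, for every open neighborhood `U` of `y`, of a connected component of
`U − Z`.  This is a germ of connected components of the complement of `Z` at `y`. -/
structure SidedPoint where
  /-- the underlying point -/
  pt : Y
  /-- the chosen component of `U − Z` for each open neighborhood `U` of `pt` -/
  comp : ∀ U : Set Y, IsOpen U → pt ∈ U → Set Y
  isComp : ∀ (U : Set Y) (hU : IsOpen U) (hy : pt ∈ U),
    ∃ x ∈ U \ Z, comp U hU hy = connectedComponentIn (U \ Z) x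
  mono : ∀ (U V : Set Y) (hU : IsOpen U) (hV : IsOpen V) (hyU : pt ∈ U) (hyV : pt ∈ V),
    U ⊆ V → comp U hU hyU ⊆ comp V hV hyV

/-- The topology on the space of sides, generated by the basic sets
`V(ȳ, U) = { ȳ' | y' ∈ U and C'_U = C_U }`. -/
instance : TopologicalSpace (SidedPoint Y Z) :=
  TopologicalSpace.generateFrom
    {S | ∃ (U C : Set Y) (hU : IsOpen U),
      S = {p : SidedPoint Y Z | ∃ h : p.pt ∈ U, p.comp U hU h = C}}


variable {Y Z}

/-- The subset of `Y ⋌ Z` of sided points all of whose germ components lie in `C`. -/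
def tildeSet (C : Set Y) : Set (SidedPoint Y Z) :=
  {p | ∀ (U : Set Y) (hU : IsOpen U) (hy : p.pt ∈ U), p.comp U hU hy ⊆ C}

/-!
A point `y ∉ Z` carries a canonical side, the germ of its own component of `U − Z`; this embeds
`Y − Z` into `Y ⋌ Z`, continuously because the components of the open sets `U − Z` are open.
The component `p.component` of `Y − Z` chosen by a sided point on the whole space is locally
constant on `Y ⋌ Z`, so each `C̃`, being one of its fibres, is clopen. Every neighbourhood of
`p ∈ C̃` contains the canonical sided points of some `p.comp U ⊆ C`, so `C̃` lies between the
connected image of `C` and its closure, hence is connected.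
-/

namespace SidedPoint

def ofNotMem (y : Y) (hy : y ∉ Z) : SidedPoint Y Z where
  pt := y
  comp U _ _ := connectedComponentIn (U \ Z) y
  isComp _ _ hyU := ⟨y, ⟨hyU, hy⟩, rfl⟩
  mono _ _ _ _ _ _ hUV := connectedComponentIn_mono y (sdiff_subset_sdiff_left hUV)

def ofSubsetCompl {s : Set Y} (hs : s ⊆ Zᶜ) (y : s) : SidedPoint Y Z :=
  ofNotMem y (hs y.2)

def component (p : SidedPoint Y Z) : Set Y :=
  p.comp univ isOpen_univ (mem_univ _)

variable (p : SidedPoint Y Z)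

theorem comp_subset {U : Set Y} (hU : IsOpen U) (hy : p.pt ∈ U) : p.comp U hU hy ⊆ U \ Z := by
  obtain ⟨x, -, hx⟩ := p.isComp U hU hy
  exact hx ▸ connectedComponentIn_subset _ _

theorem comp_nonempty {U : Set Y} (hU : IsOpen U) (hy : p.pt ∈ U) :
    (p.comp U hU hy).Nonempty := by
  obtain ⟨x, hx, hpx⟩ := p.isComp U hU hy
  exact ⟨x, hpx ▸ mem_connectedComponentIn hx⟩

theorem comp_eq_connectedComponentIn {U : Set Y} {hU : IsOpen U} {hy : p.pt ∈ U} {x : Y}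
    (hx : x ∈ p.comp U hU hy) : p.comp U hU hy = connectedComponentIn (U \ Z) x := by
  obtain ⟨z, -, hpz⟩ := p.isComp U hU hy
  rw [hpz] at hx ⊢
  exact connectedComponentIn_eq hx

theorem component_eq_connectedComponentIn {x : Y} (hx : x ∈ p.component) :
    p.component = connectedComponentIn Zᶜ x := by
  rw [compl_eq_univ_sdiff]
  exact p.comp_eq_connectedComponentIn hx

theorem exists_component_eq : ∃ x ∈ Zᶜ, p.component = connectedComponentIn Zᶜ x := by
  obtain ⟨x, hx⟩ := p.comp_nonempty isOpen_univ (mem_univ _)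
  exact ⟨x, (p.comp_subset _ _ hx).2, p.component_eq_connectedComponentIn hx⟩

theorem isOpen_setOf_comp_eq {U : Set Y} (hU : IsOpen U) (C : Set Y) :
    IsOpen {q : SidedPoint Y Z | ∃ h : q.pt ∈ U, q.comp U hU h = C} :=
  TopologicalSpace.isOpen_generateFrom_of_mem ⟨U, C, hU, rfl⟩

theorem isLocallyConstant_component : IsLocallyConstant (component : SidedPoint Y Z → Set Y) :=
  IsLocallyConstant.iff_isOpen_fiber.2 fun C => by
    convert isOpen_setOf_comp_eq isOpen_univ C using 1
    exact Set.ext fun q => ⟨fun hq => ⟨mem_univ _, hq⟩, fun ⟨_, hq⟩ => hq⟩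

theorem continuous_pt : Continuous (pt : SidedPoint Y Z → Y) :=
  continuous_def.2 fun W hW => isOpen_iff_forall_mem_open.2 fun q hq =>
    ⟨_, fun _ h => h.1, isOpen_setOf_comp_eq hW (q.comp W hW hq), hq, rfl⟩

theorem continuous_ofSubsetCompl [LocallyConnectedSpace Y] (hZ : IsClosed Z) {s : Set Y}
    (hs : s ⊆ Zᶜ) : Continuous (ofSubsetCompl hs) := by
  rw [continuous_generateFrom_iff]
  rintro _ ⟨U, C, hU, rfl⟩
  refine isOpen_iff_forall_mem_open.2 fun y ⟨hyU, hyC⟩ => ?_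
  refine ⟨Subtype.val ⁻¹' connectedComponentIn (U \ Z) y, fun y' hy' => ?_,
    (hU.sdiff hZ).connectedComponentIn.preimage continuous_subtype_val,
    mem_connectedComponentIn ⟨hyU, hs y.2⟩⟩
  exact ⟨(connectedComponentIn_subset _ _ hy').1, (connectedComponentIn_eq hy').symm.trans hyC⟩

theorem isEmbedding_ofSubsetCompl [LocallyConnectedSpace Y] (hZ : IsClosed Z) {s : Set Y}
    (hs : s ⊆ Zᶜ) : IsEmbedding (ofSubsetCompl hs) :=
  .of_comp (continuous_ofSubsetCompl hZ hs) continuous_pt .subtypeVal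

theorem exists_forall_ofNotMem_mem {N : Set (SidedPoint Y Z)} (hN : IsOpen N) (hp : p ∈ N) :
    ∃ (U : Set Y) (hU : IsOpen U) (hy : p.pt ∈ U), ∀ x (hx : x ∈ p.comp U hU hy),
      ofNotMem x (p.comp_subset hU hy hx).2 ∈ N := by
  induction hN with
  | basic s hs =>
    obtain ⟨U, C, hU, rfl⟩ := hs
    obtain ⟨hy, rfl⟩ := hp
    exact ⟨U, hU, hy, fun x hx => ⟨(p.comp_subset hU hy hx).1,
      (p.comp_eq_connectedComponentIn hx).symm⟩⟩
  | univ => exact ⟨univ, isOpen_univ, mem_univ _, fun _ _ => mem_univ _⟩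
  | inter _ _ _ _ ihs iht =>
    obtain ⟨U, hU, hyU, hUs⟩ := ihs hp.1
    obtain ⟨V, hV, hyV, hVt⟩ := iht hp.2
    refine ⟨U ∩ V, hU.inter hV, ⟨hyU, hyV⟩, fun x hx => ⟨hUs x ?_, hVt x ?_⟩⟩
    · exact p.mono _ _ _ _ _ _ inter_subset_left hx
    · exact p.mono _ _ _ _ _ _ inter_subset_right hx
  | sUnion S _ ih =>
    obtain ⟨s, hsS, hps⟩ := hp
    obtain ⟨U, hU, hy, hUs⟩ := ih s hsS hps
    exact ⟨U, hU, hy, fun x hx => ⟨s, hsS, hUs x hx⟩⟩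

end SidedPoint

open SidedPoint

variable {x₀ : Y}

theorem ofNotMem_mem_tildeSet {x : Y} (hx : x ∈ connectedComponentIn Zᶜ x₀) :
    ofNotMem x (connectedComponentIn_subset _ _ hx) ∈ tildeSet (connectedComponentIn Zᶜ x₀) :=
  fun _ _ _ => (connectedComponentIn_mono x fun _ ha => ha.2).trans
    (connectedComponentIn_eq hx).symm.subset

theorem mem_tildeSet_iff {p : SidedPoint Y Z} :
    p ∈ tildeSet (connectedComponentIn Zᶜ x₀) ↔
      p.component = connectedComponentIn Zᶜ x₀ := by
  refine ⟨fun hp => ?_, fun h U hU hy => (p.mono _ _ _ _ _ _ (subset_univ U)).trans h.subset⟩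
  obtain ⟨x, hx⟩ := p.comp_nonempty isOpen_univ (mem_univ _)
  rw [p.component_eq_connectedComponentIn hx, connectedComponentIn_eq (hp _ _ _ hx)]

theorem isClopen_tildeSet :
    IsClopen (tildeSet (connectedComponentIn Zᶜ x₀) : Set (SidedPoint Y Z)) := by
  convert isLocallyConstant_component.isClopen_fiber (connectedComponentIn Zᶜ x₀) using 1
  exact Set.ext fun _ => mem_tildeSet_iff

theorem range_ofSubsetCompl_subset_tildeSet :
    range (ofSubsetCompl (connectedComponentIn_subset Zᶜ x₀)) ⊆
      tildeSet (connectedComponentIn Zᶜ x₀) := by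
  rintro _ ⟨y, rfl⟩
  exact ofNotMem_mem_tildeSet y.2

theorem tildeSet_subset_closure_range :
    tildeSet (connectedComponentIn Zᶜ x₀) ⊆
      closure (range (ofSubsetCompl (connectedComponentIn_subset Zᶜ x₀))) := by
  refine fun p hp => mem_closure_iff.2 fun N hN hpN => ?_
  obtain ⟨U, hU, hy, hUN⟩ := p.exists_forall_ofNotMem_mem hN hpN
  obtain ⟨x, hx⟩ := p.comp_nonempty hU hy
  exact ⟨_, hUN x hx, ⟨x, hp U hU hy hx⟩, rfl⟩

theorem tildeSet_eq_connectedComponent [LocallyConnectedSpace Y] (hZ : IsClosed Z)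
    (hx₀ : x₀ ∈ Zᶜ) {p : SidedPoint Y Z}
    (hp : p ∈ tildeSet (connectedComponentIn Zᶜ x₀)) :
    tildeSet (connectedComponentIn Zᶜ x₀) = connectedComponent p := by
  have : ConnectedSpace (connectedComponentIn Zᶜ x₀) :=
    isConnected_iff_connectedSpace.1 (isConnected_connectedComponentIn_iff.2 hx₀)
  have hpre : IsPreconnected (tildeSet (connectedComponentIn Zᶜ x₀) : Set (SidedPoint Y Z)) :=
    (isPreconnected_range (continuous_ofSubsetCompl hZ _)).subset_closure
      range_ofSubsetCompl_subset_tildeSet tildeSet_subset_closure_range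
  exact (hpre.subset_connectedComponent hp).antisymm
    (isClopen_tildeSet.connectedComponent_subset hp)

theorem injOn_tildeSet : InjOn (tildeSet : Set Y → Set (SidedPoint Y Z))
    {C | ∃ x ∈ Zᶜ, C = connectedComponentIn Zᶜ x} := by
  rintro _ ⟨x, hx, rfl⟩ _ ⟨x', -, rfl⟩ h
  have hmem := ofNotMem_mem_tildeSet (mem_connectedComponentIn hx)
  exact (mem_tildeSet_iff.1 hmem).symm.trans (mem_tildeSet_iff.1 (h ▸ hmem))

/-- For `Y` locally connected and `Z ⊆ Y` closed: every connected component `C` of `Y − Z`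
embeds topologically into the space of sides `Y ⋌ Z` over the inclusion `C ⊆ Y`, and the
connected components of `Y ⋌ Z` are exactly the sets `C̃ = tildeSet C` for `C` a connected
component of `Y − Z`; the correspondence `C ↦ C̃` is a bijection between the components of
`Y − Z` and those of `Y ⋌ Z`. -/
theorem sidedPoint_components (Y : Type*) [TopologicalSpace Y] [LocallyConnectedSpace Y]
    (Z : Set Y) (hZ : IsClosed Z) :
    (∀ C : Set Y, (∃ x ∈ Zᶜ, C = connectedComponentIn Zᶜ x) →
      ∃ e : C → SidedPoint Y Z, IsEmbedding e ∧ ∀ y : C, (e y).pt = (y : Y)) ∧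
    {T : Set (SidedPoint Y Z) | ∃ p : SidedPoint Y Z, T = connectedComponent p}
      = (fun C => (tildeSet C : Set (SidedPoint Y Z))) ''
          {C : Set Y | ∃ x ∈ Zᶜ, C = connectedComponentIn Zᶜ x} ∧
    Set.InjOn (fun C => (tildeSet C : Set (SidedPoint Y Z)))
      {C : Set Y | ∃ x ∈ Zᶜ, C = connectedComponentIn Zᶜ x} := by
  refine ⟨?_, ?_, injOn_tildeSet⟩
  · rintro C ⟨x, -, rfl⟩
    exact ⟨_, isEmbedding_ofSubsetCompl hZ (connectedComponentIn_subset _ _), fun _ => rfl⟩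
  ext T
  constructor
  · rintro ⟨p, rfl⟩
    obtain ⟨x, hx, hpx⟩ := p.exists_component_eq
    exact ⟨_, ⟨x, hx, rfl⟩, tildeSet_eq_connectedComponent hZ hx (mem_tildeSet_iff.2 hpx)⟩
  · rintro ⟨C, ⟨x, hx, rfl⟩, rfl⟩
    exact ⟨_, tildeSet_eq_connectedComponent hZ hx <|
      ofNotMem_mem_tildeSet <| mem_connectedComponentIn hx⟩
end
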